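/- Let v_1, ..., v_n ∈ ℤ^n be linearly independent generators of a simplicial cone with v_i^T B v_j ≥ 0 for all i, j and v_i^T B v_i > 0, let W = UV be the Hermite normal form (U unimodular, W upper triangular with nonzero diagonal), and set B' = (U^{-1})^T B U^{-1}. If α ∈ ℝ^n_{≥0} satisfies B[Σ α_i v_i] ≤ M, then α_n ≤ sqrt(M / B'[w_n]), where w_n is the last column of W. -/
import Mathlib


open Matrix

/-- The quadratic form `B[x] = xᵀ B x`. -/
def quadForm {n : ℕ} (B : Matrix (Fin n) (Fin n) ℝ) (x : Fin n → ℝ) : ℝ :=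
  x ⬝ᵥ B.mulVec x


lemma sumDotProduct {ι m : Type*} [Fintype ι] [Fintype m] (f : ι → m → ℝ) (w : m → ℝ) :
    (∑ i, f i) ⬝ᵥ w = ∑ i, f i ⬝ᵥ w := by
  simp only [dotProduct, Finset.sum_apply, Finset.sum_mul]
  exact Finset.sum_comm

lemma dotProductSum {ι m : Type*} [Fintype ι] [Fintype m] (w : m → ℝ) (f : ι → m → ℝ) :
    w ⬝ᵥ (∑ i, f i) = ∑ i, w ⬝ᵥ f i := by
  simp only [dotProduct, Finset.sum_apply, Finset.mul_sum]
  exact Finset.sum_comm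

lemma mulVecSum {ι m k : Type*} [Fintype ι] [Fintype k] (A : Matrix m k ℝ) (f : ι → k → ℝ) :
    A.mulVec (∑ i, f i) = ∑ i, A.mulVec (f i) := by
  funext p
  simp only [Matrix.mulVec, Finset.sum_apply]
  exact dotProductSum _ _

theorem finckePohst_last_coefficient_bound {n : ℕ}
    (B : Matrix (Fin (n + 1)) (Fin (n + 1)) ℝ) (hBsymm : B.IsSymm)
    (V U W : Matrix (Fin (n + 1)) (Fin (n + 1)) ℤ)
    (hV : V.det ≠ 0)
    (hnn : ∀ i j : Fin (n + 1),
      0 ≤ (fun k => ((V k i : ℤ) : ℝ)) ⬝ᵥ B.mulVec (fun k => ((V k j : ℤ) : ℝ)))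
    (hpos : ∀ i : Fin (n + 1), 0 < quadForm B (fun k => ((V k i : ℤ) : ℝ)))
    (hU : U.det = 1 ∨ U.det = -1)
    (hUV : U * V = W)
    (hWtri : ∀ i j : Fin (n + 1), j < i → W i j = 0)
    (hWdiag : ∀ i : Fin (n + 1), W i i ≠ 0)
    (B' : Matrix (Fin (n + 1)) (Fin (n + 1)) ℝ)
    (hB' : B' = ((U.map (Int.cast : ℤ → ℝ))⁻¹)ᵀ * B * (U.map (Int.cast : ℤ → ℝ))⁻¹)
    (α : Fin (n + 1) → ℝ) (hα : ∀ i, 0 ≤ α i)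
    (M : ℝ)
    (hM : quadForm B (∑ i, α i • (fun k => ((V k i : ℤ) : ℝ))) ≤ M) :
    α (Fin.last n) ≤
      Real.sqrt (M / quadForm B' (fun k => ((W k (Fin.last n) : ℤ) : ℝ))) := by
  set Ur : Matrix (Fin (n + 1)) (Fin (n + 1)) ℝ := U.map (Int.cast : ℤ → ℝ) with hUr
  set v : Fin (n + 1) → Fin (n + 1) → ℝ := fun i k => ((V k i : ℤ) : ℝ) with hv
  have hUdet : IsUnit Ur.det := by
    have : Ur.det = ((U.det : ℤ) : ℝ) := by
      rw [hUr]
      exact (RingHom.map_det (Int.castRingHom ℝ) U).symm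
    rw [this]
    rcases hU with h | h <;> simp [h]
  have hinv : Ur⁻¹ * Ur = 1 := nonsing_inv_mul Ur hUdet
  -- w = Ur.mulVec (v last)
  have hw : (fun k => ((W k (Fin.last n) : ℤ) : ℝ)) = Ur.mulVec (v (Fin.last n)) := by
    funext k
    rw [← hUV]
    simp only [Matrix.mul_apply, Matrix.mulVec, dotProduct, hUr, Matrix.map_apply, hv]
    push_cast
    ring
  -- quadForm B' w = quadForm B (v last)
  have hQ : quadForm B' (fun k => ((W k (Fin.last n) : ℤ) : ℝ)) = quadForm B (v (Fin.last n)) := by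
    have hcancel : ∀ x : Fin (n + 1) → ℝ, Ur⁻¹.mulVec (Ur.mulVec x) = x := fun x => by
      rw [Matrix.mulVec_mulVec, hinv, Matrix.one_mulVec]
    rw [hw, hB', quadForm, quadForm, Matrix.mul_assoc, ← Matrix.mulVec_mulVec,
      ← Matrix.mulVec_mulVec, hcancel, Matrix.dotProduct_mulVec, Matrix.vecMul_transpose,
      hcancel]
  set c : ℝ := quadForm B (v (Fin.last n)) with hc
  have hcpos : 0 < c := hpos (Fin.last n)
  -- expand the quadratic form
  have hexp : quadForm B (∑ i, α i • v i) = ∑ i, ∑ j, α i * α j * (v i ⬝ᵥ B.mulVec (v j)) := by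
    rw [quadForm]
    rw [sumDotProduct]
    refine Finset.sum_congr rfl fun i _ => ?_
    rw [mulVecSum, dotProductSum]
    refine Finset.sum_congr rfl fun j _ => ?_
    rw [Matrix.mulVec_smul, smul_dotProduct, dotProduct_smul]
    simp [mul_comm, mul_assoc, mul_left_comm]
  have hterm : ∀ i j, 0 ≤ α i * α j * (v i ⬝ᵥ B.mulVec (v j)) := fun i j =>
    mul_nonneg (mul_nonneg (hα i) (hα j)) (hnn i j)
  have hlow : α (Fin.last n) * α (Fin.last n) * c ≤ quadForm B (∑ i, α i • v i) := by
    rw [hexp]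
    calc α (Fin.last n) * α (Fin.last n) * c
        = α (Fin.last n) * α (Fin.last n) * (v (Fin.last n) ⬝ᵥ B.mulVec (v (Fin.last n))) := by
          rw [hc]; rfl
      _ ≤ ∑ j, α (Fin.last n) * α j * (v (Fin.last n) ⬝ᵥ B.mulVec (v j)) :=
          Finset.single_le_sum (fun j _ => hterm (Fin.last n) j) (Finset.mem_univ _)
      _ ≤ ∑ i, ∑ j, α i * α j * (v i ⬝ᵥ B.mulVec (v j)) :=
          Finset.single_le_sum
            (fun i _ => Finset.sum_nonneg fun j _ => hterm i j) (Finset.mem_univ _)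
  have hsq : α (Fin.last n) ^ 2 ≤ M / c := by
    rw [le_div_iff₀ hcpos]
    calc α (Fin.last n) ^ 2 * c = α (Fin.last n) * α (Fin.last n) * c := by ring
      _ ≤ quadForm B (∑ i, α i • v i) := hlow
      _ ≤ M := hM
  calc α (Fin.last n) = Real.sqrt (α (Fin.last n) ^ 2) := (Real.sqrt_sq (hα _)).symm
    _ ≤ Real.sqrt (M / c) := Real.sqrt_le_sqrt hsq
    _ = Real.sqrt (M / quadForm B' (fun k => ((W k (Fin.last n) : ℤ) : ℝ))) := by rw [hQ]
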